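/- (Theorem 2, second bound) In the oblivious model, assume b_k r_k > 0 and r_k ζ_{nk} > 0 for all n, k ∈ {1,2}. Then limsup_{T→∞} (1/T) ∑_{t=1}^{T} (1/4) ∑_{m∈{1,2}} ∑_{k∈{1,2}} E[h_{mk}(t)] ≤ (1/2) ∑_{k∈{1,2}} [ (1 − b_k + b_k r_k)/(b_k r_k) + ∑_{n∈{1,2}} b_k^{(n)} (1 − r_k)/(r_k ζ_{nk}) ]. -/

import Mathlib

/-- Index type for the family of primitive random variables:
`inl (m, k, t)` indexes the request variable of user `m`, CP `k`, time `t`;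
`inr (n, k, t)` indexes the command indicator of eRRH `n`, CP `k`, time `t`. -/
abbrev FranIdx : Type := (Fin 2 × Fin 2 × ℕ) ⊕ (Fin 2 × Fin 2 × ℕ)

/-- Codomain of each primitive random variable. -/
def FranType : FranIdx → Type
  | .inl _ => Fin 3
  | .inr _ => Bool

instance FranType.instMeasurableSpace : ∀ i, MeasurableSpace (FranType i)
  | .inl _ => inferInstanceAs (MeasurableSpace (Fin 3))
  | .inr _ => inferInstanceAs (MeasurableSpace Bool)

/-- Oblivious 2-user/2-eRRH/2-CP F-RAN model. -/
structure ObliviousFRAN where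
  /-- sample space -/
  Ω : Type
  [mΩ : MeasurableSpace Ω]
  μ : MeasureTheory.Measure Ω
  isProb : MeasureTheory.IsProbabilityMeasure μ
  /-- request rates: `bsplit k n = b_k^{(n+1)}` -/
  bsplit : Fin 2 → Fin 2 → ℝ
  bsplit_nonneg : ∀ k n, 0 ≤ bsplit k n
  bsum_le_one : ∀ k, bsplit k 0 + bsplit k 1 ≤ 1
  /-- command rates -/
  r : Fin 2 → ℝ
  r_nonneg : ∀ k, 0 ≤ r k
  r_le_one : ∀ k, r k ≤ 1
  /-- request variables: value `0` = no request, value `n.succ` = request sent to eRRH `n` -/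
  R : Fin 2 → Fin 2 → ℕ → Ω → Fin 3
  /-- command indicators -/
  γ : Fin 2 → Fin 2 → ℕ → Ω → Bool
  R_meas : ∀ m k t, Measurable (R m k t)
  γ_meas : ∀ n k t, Measurable (γ n k t)
  R_law : ∀ m k t (n : Fin 2), μ {ω | R m k t ω = n.succ} = ENNReal.ofReal (bsplit k n)
  R_law0 : ∀ m k t, μ {ω | R m k t ω = 0} = ENNReal.ofReal (1 - (bsplit k 0 + bsplit k 1))
  γ_law : ∀ n k t, μ {ω | γ n k t ω = true} = ENNReal.ofReal (r k)
  /-- all the primitive random variables are mutually independent -/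
  indep : ProbabilityTheory.iIndepFun (m := fun i => FranType.instMeasurableSpace i)
      (fun i => Sum.rec (motive := fun j => Ω → FranType j)
        (fun p => R p.1 p.2.1 p.2.2) (fun p => γ p.1 p.2.1 p.2.2) i) μ

attribute [instance] ObliviousFRAN.mΩ

open MeasureTheory ProbabilityTheory Filter

namespace ObliviousFRAN

variable (M : ObliviousFRAN)

/-- AoI of CP `k` at eRRH `n`. -/
def g (n k : Fin 2) : ℕ → M.Ω → ℕ
  | 0 => fun _ => 1
  | t + 1 => fun ω =>
      if M.γ n k t ω = true ∧ ∃ m : Fin 2, M.R m k t ω = n.succ then 1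
      else g n k t ω + 1

/-- AoI of CP `k` at user `m`. -/
def h (m k : Fin 2) : ℕ → M.Ω → ℕ
  | 0 => fun _ => 1
  | t + 1 => fun ω =>
      if M.R m k t ω = 0 then h m k t ω + 1
      else if M.R m k t ω = 1 then
        (if M.γ 0 k t ω = true then 1 else min (h m k t ω) (M.g 0 k t ω) + 1)
      else
        (if M.γ 1 k t ω = true then 1 else min (h m k t ω) (M.g 1 k t ω) + 1)

/-- Expected AoI of CP `k` at eRRH `n` at time `t`. -/
noncomputable def Eg (n k : Fin 2) (t : ℕ) : ℝ := ∫ ω, (M.g n k t ω : ℝ) ∂M.μ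

/-- Expected AoI of CP `k` at user `m` at time `t`. -/
noncomputable def Eh (m k : Fin 2) (t : ℕ) : ℝ := ∫ ω, (M.h m k t ω : ℝ) ∂M.μ

/-- Total request rate of a user for CP `k`: `b_k = b_k^{(1)} + b_k^{(2)}`. -/
def bk (k : Fin 2) : ℝ := M.bsplit k 0 + M.bsplit k 1

/-- `ζ_{nk} = 1 - (1 - b_k^{(n)})^2`. -/
def ζ (n k : Fin 2) : ℝ := 1 - (1 - M.bsplit k n) ^ 2

end ObliviousFRAN

/-! If a request of user `m` for CP `k` reaches an eRRH that is commanded in the same slot, the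
user's age drops to `1`; otherwise it grows by at most `1`. This direct fetch depends only on the
slot-`t` variables and has probability `b_k r_k`, while `h_{mk}(t)` depends only on earlier slots,
so independence gives `E h(t+1) ≤ 1 + (1 - b_k r_k) E h(t)` and hence `E h(t) ≤ 1 / (b_k r_k)`.
Since `ζ_{nk} = b_k^{(n)} (2 - b_k^{(n)})`, we have
`∑_n b_k^{(n)} / ζ_{nk} = ∑_n 1 / (2 - b_k^{(n)}) ≥ 1`, which makes `1 / (b_k r_k)` at most the
stated bound. -/

theorem le_of_succ_le_add_mul {x : ℕ → ℝ} {a c L : ℝ} (hc : 0 ≤ c) (hL : a + c * L ≤ L)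
    (h0 : x 0 ≤ L) (hx : ∀ t, x (t + 1) ≤ a + c * x t) : ∀ t, x t ≤ L
  | 0 => h0
  | t + 1 => (hx t).trans <| le_trans (by gcongr; exact le_of_succ_le_add_mul hc hL h0 hx t) hL

theorem one_le_div_one_sub_sq_add_div_one_sub_sq {x y : ℝ} (hx : 0 < x) (hy : 0 < y)
    (hxy : x + y ≤ 1) : 1 ≤ x / (1 - (1 - x) ^ 2) + y / (1 - (1 - y) ^ 2) := by
  have key {z : ℝ} (hz : 0 < z) (hz1 : z < 2) : z / (1 - (1 - z) ^ 2) = (2 - z)⁻¹ := by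
    rw [show 1 - (1 - z) ^ 2 = z * (2 - z) by ring, div_mul_eq_div_div, div_self hz.ne', one_div]
  rw [key hx (by linarith), key hy (by linarith), inv_add_inv (by linarith) (by linarith),
    le_div_iff₀ (by nlinarith)]
  nlinarith

theorem limsup_cesaro_le {f : ℕ → ℝ} {D : ℝ} (hf : ∀ t, 0 ≤ f t) (hD : ∀ t, f t ≤ D) :
    limsup (fun T : ℕ => (1 / (T : ℝ)) * ∑ t ∈ Finset.Icc 1 T, f t) atTop ≤ D := by
  refine limsup_le_of_le (isCoboundedUnder_le_of_le atTop fun T =>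
    mul_nonneg (by positivity) (Finset.sum_nonneg fun t _ => hf t))
    (eventually_atTop.2 ⟨1, fun T hT => ?_⟩)
  have hT : (0 : ℝ) < T := by exact_mod_cast hT
  calc (1 / (T : ℝ)) * ∑ t ∈ Finset.Icc 1 T, f t
      ≤ (1 / (T : ℝ)) * ∑ _t ∈ Finset.Icc 1 T, D := by gcongr with t; exact hD t
    _ = D := by simp [field]

def FranIdx.time : FranIdx → ℕ := Sum.elim (fun p => p.2.2) (fun p => p.2.2)

namespace ObliviousFRAN

variable (M : ObliviousFRAN)

instance instIsProbabilityMeasure : IsProbabilityMeasure M.μ := M.isProb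

def fam : ∀ i : FranIdx, M.Ω → FranType i :=
  fun i => Sum.rec (motive := fun j => M.Ω → FranType j)
    (fun p => M.R p.1 p.2.1 p.2.2) (fun p => M.γ p.1 p.2.1 p.2.2) i

lemma measurable_fam : ∀ i, Measurable (M.fam i)
  | .inl p => M.R_meas p.1 p.2.1 p.2.2
  | .inr p => M.γ_meas p.1 p.2.1 p.2.2

abbrev past (t : ℕ) : MeasurableSpace M.Ω :=
  ⨆ i ∈ {i : FranIdx | i.time < t}, (FranType.instMeasurableSpace i).comap (M.fam i)

abbrev future (t : ℕ) : MeasurableSpace M.Ω :=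
  ⨆ i ∈ {i : FranIdx | i.time < t}ᶜ, (FranType.instMeasurableSpace i).comap (M.fam i)

lemma past_le (t : ℕ) : M.past t ≤ M.mΩ :=
  iSup₂_le fun i _ => (M.measurable_fam i).comap_le

lemma future_le (t : ℕ) : M.future t ≤ M.mΩ :=
  iSup₂_le fun i _ => (M.measurable_fam i).comap_le

lemma past_mono {s t : ℕ} (hst : s ≤ t) : M.past s ≤ M.past t :=
  biSup_mono fun _ hi => lt_of_lt_of_le hi hst

lemma indep_past_future (t : ℕ) : Indep (M.past t) (M.future t) M.μ :=
  indep_biSup_compl (fun i => (M.measurable_fam i).comap_le) M.indep _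

lemma comap_le_past {i : FranIdx} {t : ℕ} (hi : i.time < t) :
    (FranType.instMeasurableSpace i).comap (M.fam i) ≤ M.past t :=
  le_biSup (f := fun j => (FranType.instMeasurableSpace j).comap (M.fam j)) hi

lemma comap_le_future {i : FranIdx} {t : ℕ} (hi : t ≤ i.time) :
    (FranType.instMeasurableSpace i).comap (M.fam i) ≤ M.future t :=
  le_biSup (f := fun j => (FranType.instMeasurableSpace j).comap (M.fam j)) (not_lt.2 hi)

lemma indepFun_of_measurable_future_past {β δ : Type*} [MeasurableSpace β] [MeasurableSpace δ]
    {X : M.Ω → β} {Y : M.Ω → δ} {t : ℕ} (hX : Measurable[M.future t] X)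
    (hY : Measurable[M.past t] Y) : IndepFun X Y M.μ :=
  (indep_of_indep_of_le_right (indep_of_indep_of_le_left (M.indep_past_future t) hY.comap_le)
    hX.comap_le).symm

lemma measurable_R_past {m k : Fin 2} {s t : ℕ} (hst : s < t) :
    Measurable[M.past t] (M.R m k s) :=
  .of_comap_le (M.comap_le_past (i := .inl (m, k, s)) hst)

lemma measurable_γ_past {n k : Fin 2} {s t : ℕ} (hst : s < t) :
    Measurable[M.past t] (M.γ n k s) :=
  .of_comap_le (M.comap_le_past (i := .inr (n, k, s)) hst)

lemma measurable_R_future {m k : Fin 2} {t : ℕ} : Measurable[M.future t] (M.R m k t) :=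
  .of_comap_le (M.comap_le_future (i := .inl (m, k, t)) le_rfl)

lemma measurable_γ_future {n k : Fin 2} {t : ℕ} : Measurable[M.future t] (M.γ n k t) :=
  .of_comap_le (M.comap_le_future (i := .inr (n, k, t)) le_rfl)

lemma measurable_g_past (n k : Fin 2) : ∀ t, Measurable[M.past t] (M.g n k t)
  | 0 => measurable_const
  | t + 1 => by
    have hg := (measurable_g_past n k t).mono (M.past_mono t.le_succ) le_rfl
    have hγ := M.measurable_γ_past (n := n) (k := k) t.lt_succ_self
    have hR m := M.measurable_R_past (m := m) (k := k) t.lt_succ_self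
    -- `fun_prop` works relative to the `MeasurableSpace` instance in scope.
    let := M.past (t + 1)
    exact .ite (Measurable.setOf (by fun_prop)) measurable_const (hg.add_const 1)

lemma measurable_h_past (m k : Fin 2) : ∀ t, Measurable[M.past t] (M.h m k t)
  | 0 => measurable_const
  | t + 1 => by
    have hh := (measurable_h_past m k t).mono (M.past_mono t.le_succ) le_rfl
    have hg n := (M.measurable_g_past n k t).mono (M.past_mono t.le_succ) le_rfl
    have hR := M.measurable_R_past (m := m) (k := k) t.lt_succ_self
    have hγ n := M.measurable_γ_past (n := n) (k := k) t.lt_succ_self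
    let := M.past (t + 1)
    refine .ite (hR.eq_const 0).setOf (hh.add_const 1) (.ite (hR.eq_const 1).setOf ?_ ?_)
    · exact .ite ((hγ 0).eq_const true).setOf measurable_const ((hh.min (hg 0)).add_const 1)
    · exact .ite ((hγ 1).eq_const true).setOf measurable_const ((hh.min (hg 1)).add_const 1)

lemma measurable_h (m k : Fin 2) (t : ℕ) : Measurable (M.h m k t) :=
  (M.measurable_h_past m k t).mono (M.past_le t) le_rfl

lemma h_le (m k : Fin 2) : ∀ t ω, M.h m k t ω ≤ t + 1
  | 0, _ => le_rfl
  | t + 1, ω => by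
    have ih := h_le m k t ω
    have := min_le_left (M.h m k t ω) (M.g 0 k t ω)
    have := min_le_left (M.h m k t ω) (M.g 1 k t ω)
    simp only [h]
    split_ifs <;> omega

lemma integrable_h (m k : Fin 2) (t : ℕ) : Integrable (fun ω => (M.h m k t ω : ℝ)) M.μ :=
  .of_bound (measurable_from_top.comp (M.measurable_h m k t)).aestronglyMeasurable (t + 1) <|
    .of_forall fun ω => by
      simpa using (by exact_mod_cast M.h_le m k t ω : (M.h m k t ω : ℝ) ≤ t + 1)

def directFetch (m k : Fin 2) (t : ℕ) : Set M.Ω :=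
  {ω | ∃ n : Fin 2, M.R m k t ω = n.succ ∧ M.γ n k t ω = true}

lemma measurableSet_directFetch_future (m k : Fin 2) (t : ℕ) :
    MeasurableSet[M.future t] (M.directFetch m k t) := by
  have hR := M.measurable_R_future (m := m) (k := k) (t := t)
  have hγ n := M.measurable_γ_future (n := n) (k := k) (t := t)
  let := M.future t
  exact Measurable.setOf (by fun_prop)

lemma measurableSet_directFetch (m k : Fin 2) (t : ℕ) : MeasurableSet (M.directFetch m k t) :=
  M.future_le t _ (M.measurableSet_directFetch_future m k t)

lemma measureReal_R_eq_succ_and_γ (m n k : Fin 2) (t : ℕ) :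
    M.μ.real {ω | M.R m k t ω = n.succ ∧ M.γ n k t ω = true} = M.bsplit k n * M.r k := by
  have hind : IndepFun (M.R m k t) (M.γ n k t) M.μ :=
    M.indep.indepFun (i := .inl (m, k, t)) (j := .inr (n, k, t)) Sum.inl_ne_inr
  have := hind.measure_inter_preimage_eq_mul _ _ (measurableSet_singleton n.succ)
    (measurableSet_singleton true)
  change M.μ {ω | M.R m k t ω = n.succ ∧ M.γ n k t ω = true} =
    M.μ {ω | M.R m k t ω = n.succ} * M.μ {ω | M.γ n k t ω = true} at this
  rw [measureReal_def, this, M.R_law, M.γ_law, ENNReal.toReal_mul,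
    ENNReal.toReal_ofReal (M.bsplit_nonneg k n), ENNReal.toReal_ofReal (M.r_nonneg k)]

lemma measureReal_directFetch (m k : Fin 2) (t : ℕ) :
    M.μ.real (M.directFetch m k t) = M.bk k * M.r k := by
  have hdisj : Pairwise fun n n' : Fin 2 => Disjoint
      {ω | M.R m k t ω = n.succ ∧ M.γ n k t ω = true}
      {ω | M.R m k t ω = n'.succ ∧ M.γ n' k t ω = true} :=
    fun _ _ hne => Set.disjoint_left.2 fun _ h h' =>
      hne (Fin.succ_injective _ (h.1.symm.trans h'.1))
  have hmeas n : MeasurableSet {ω | M.R m k t ω = n.succ ∧ M.γ n k t ω = true} :=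
    (Measurable.and ((M.R_meas m k t).eq_const _) ((M.γ_meas n k t).eq_const _)).setOf
  rw [directFetch, Set.ofPred_exists, measureReal_iUnion_fintype hdisj hmeas, Fin.sum_univ_two,
    measureReal_R_eq_succ_and_γ, measureReal_R_eq_succ_and_γ, bk, add_mul]

lemma h_succ_of_mem_directFetch {m k : Fin 2} {t : ℕ} {ω : M.Ω}
    (hω : ω ∈ M.directFetch m k t) : M.h m k (t + 1) ω = 1 := by
  obtain ⟨n, hR, hγ⟩ := hω
  fin_cases n <;> simp_all [h]

lemma h_succ_le (m k : Fin 2) (t : ℕ) (ω : M.Ω) : M.h m k (t + 1) ω ≤ M.h m k t ω + 1 := by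
  have := min_le_left (M.h m k t ω) (M.g 0 k t ω)
  have := min_le_left (M.h m k t ω) (M.g 1 k t ω)
  simp only [h]
  split_ifs <;> omega

lemma Eh_succ_le (m k : Fin 2) (t : ℕ) :
    M.Eh m k (t + 1) ≤ 1 + (1 - M.bk k * M.r k) * M.Eh m k t := by
  set X : M.Ω → ℝ := (M.directFetch m k t)ᶜ.indicator 1
  set H : M.Ω → ℝ := fun ω => M.h m k t ω
  have hB := M.measurableSet_directFetch m k t
  have hX : Measurable[M.future t] X :=
    measurable_const.indicator (M.measurableSet_directFetch_future m k t).compl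
  have hindep : IndepFun X H M.μ := M.indepFun_of_measurable_future_past hX
    (measurable_from_top.comp (M.measurable_h_past m k t))
  have hXH : Integrable (fun ω => X ω * H ω) M.μ :=
    (M.integrable_h m k t).bdd_mul (hX.mono (M.future_le t) le_rfl).aestronglyMeasurable
      (c := 1) (.of_forall fun ω => by by_cases hω : ω ∈ M.directFetch m k t <;> simp [X, hω])
  have hpoint ω : (M.h m k (t + 1) ω : ℝ) ≤ 1 + X ω * H ω := by
    by_cases hω : ω ∈ M.directFetch m k t
    · simp [X, hω, M.h_succ_of_mem_directFetch hω]
    · simpa [X, H, hω, add_comm] using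
        (by exact_mod_cast M.h_succ_le m k t ω : (M.h m k (t + 1) ω : ℝ) ≤ M.h m k t ω + 1)
  calc M.Eh m k (t + 1) ≤ ∫ ω, (1 + X ω * H ω) ∂M.μ :=
        integral_mono (M.integrable_h m k (t + 1)) ((integrable_const 1).add hXH) hpoint
    _ = 1 + (∫ ω, X ω ∂M.μ) * ∫ ω, H ω ∂M.μ := by
        rw [integral_add (integrable_const 1) hXH, integral_const, probReal_univ, one_smul,
          hindep.integral_fun_mul_eq_mul_integral
            (hX.mono (M.future_le t) le_rfl).aestronglyMeasurable
            (M.integrable_h m k t).aestronglyMeasurable]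
    _ = 1 + (1 - M.bk k * M.r k) * M.Eh m k t := by
        rw [integral_indicator_one hB.compl, probReal_compl_eq_one_sub hB, measureReal_directFetch]
        rfl

lemma Eh_zero (m k : Fin 2) : M.Eh m k 0 = 1 := by
  simp [Eh, h]

lemma bk_mul_r_le_one (k : Fin 2) : M.bk k * M.r k ≤ 1 :=
  mul_le_one₀ (M.bsum_le_one k) (M.r_nonneg k) (M.r_le_one k)

lemma Eh_le_inv (m k : Fin 2) (hbr : 0 < M.bk k * M.r k) (t : ℕ) :
    M.Eh m k t ≤ (M.bk k * M.r k)⁻¹ :=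
  le_of_succ_le_add_mul (sub_nonneg.2 (M.bk_mul_r_le_one k))
    (le_of_eq (by rw [sub_mul, one_mul, mul_inv_cancel₀ hbr.ne']; ring))
    ((M.Eh_zero m k).trans_le ((one_le_inv₀ hbr).2 (M.bk_mul_r_le_one k))) (M.Eh_succ_le m k) t

lemma Eh_nonneg (m k : Fin 2) (t : ℕ) : 0 ≤ M.Eh m k t :=
  integral_nonneg fun _ => Nat.cast_nonneg _

lemma r_pos_of_mul_ζ_pos {n k : Fin 2} (h : 0 < M.r k * M.ζ n k) : 0 < M.r k :=
  (M.r_nonneg k).lt_of_ne fun h0 => by simp [← h0] at h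

lemma bsplit_pos_of_mul_ζ_pos {n k : Fin 2} (h : 0 < M.r k * M.ζ n k) : 0 < M.bsplit k n := by
  have hζ := pos_of_mul_pos_right h (M.r_nonneg k)
  exact (M.bsplit_nonneg k n).lt_of_ne fun h0 => by simp [ζ, ← h0] at hζ

lemma bk_mul_r_pos {k : Fin 2} (h : ∀ n, 0 < M.r k * M.ζ n k) : 0 < M.bk k * M.r k :=
  mul_pos (add_pos (M.bsplit_pos_of_mul_ζ_pos (h 0)) (M.bsplit_pos_of_mul_ζ_pos (h 1)))
    (M.r_pos_of_mul_ζ_pos (h 0))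

lemma inv_bk_mul_r_le {k : Fin 2} (h : ∀ n, 0 < M.r k * M.ζ n k) :
    (M.bk k * M.r k)⁻¹ ≤ (1 - M.bk k + M.bk k * M.r k) / (M.bk k * M.r k)
      + ∑ n : Fin 2, M.bsplit k n * (1 - M.r k) / (M.r k * M.ζ n k) := by
  have hr := M.r_pos_of_mul_ζ_pos (h 0)
  have hb n := M.bsplit_pos_of_mul_ζ_pos (h n)
  have hbk : 0 < M.bk k := add_pos (hb 0) (hb 1)
  have hζ n : 0 < M.ζ n k := pos_of_mul_pos_right (h n) hr.le
  have hsum : 1 ≤ ∑ n : Fin 2, M.bsplit k n / M.ζ n k := by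
    rw [Fin.sum_univ_two]
    exact one_le_div_one_sub_sq_add_div_one_sub_sq (hb 0) (hb 1) (M.bsum_le_one k)
  calc (M.bk k * M.r k)⁻¹ = (1 - M.bk k + M.bk k * M.r k) / (M.bk k * M.r k)
        + (1 - M.r k) / M.r k * 1 := by field_simp; ring
    _ ≤ (1 - M.bk k + M.bk k * M.r k) / (M.bk k * M.r k)
        + (1 - M.r k) / M.r k * ∑ n : Fin 2, M.bsplit k n / M.ζ n k := by
      gcongr
      exact div_nonneg (sub_nonneg.2 (M.r_le_one k)) hr.le
    _ = _ := by
      rw [Finset.mul_sum]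
      congr 1
      refine Finset.sum_congr rfl fun n _ => ?_
      field_simp [(hζ n).ne']

end ObliviousFRAN

theorem stmt5_general (M : ObliviousFRAN)
    (hpos' : ∀ n k : Fin 2, 0 < M.r k * M.ζ n k) :
    limsup
      (fun T : ℕ =>
        (1 / (T : ℝ)) * ∑ t ∈ Finset.Icc 1 T,
          (1 / 4 : ℝ) * ∑ m : Fin 2, ∑ k : Fin 2, M.Eh m k t)
      atTop
    ≤ (1 / 2 : ℝ) * ∑ k : Fin 2,
        ((1 - M.bk k + M.bk k * M.r k) / (M.bk k * M.r k)
          + ∑ n : Fin 2, M.bsplit k n * (1 - M.r k) / (M.r k * M.ζ n k)) := by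
  refine limsup_cesaro_le (fun t => mul_nonneg (by norm_num) (Finset.sum_nonneg fun m _ =>
    Finset.sum_nonneg fun k _ => M.Eh_nonneg m k t)) fun t => ?_
  calc (1 / 4 : ℝ) * ∑ m : Fin 2, ∑ k : Fin 2, M.Eh m k t
      ≤ (1 / 4) * ∑ _m : Fin 2, ∑ k : Fin 2, (M.bk k * M.r k)⁻¹ := by
        gcongr with m _ k
        exact M.Eh_le_inv m k (M.bk_mul_r_pos (hpos' · k)) t
    _ = (1 / 2) * ∑ k : Fin 2, (M.bk k * M.r k)⁻¹ := by
        rw [Finset.sum_const, Finset.card_univ, Fintype.card_fin, nsmul_eq_mul]; ring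
    _ ≤ _ := by
        gcongr with k
        exact M.inv_bk_mul_r_le (hpos' · k)

/-- Theorem 2, second bound. -/
theorem stmt5 (M : ObliviousFRAN) (hpos : ∀ k : Fin 2, 0 < M.bk k * M.r k)
    (hpos' : ∀ n k : Fin 2, 0 < M.r k * M.ζ n k) :
    limsup
      (fun T : ℕ =>
        (1 / (T : ℝ)) * ∑ t ∈ Finset.Icc 1 T,
          (1 / 4 : ℝ) * ∑ m : Fin 2, ∑ k : Fin 2, M.Eh m k t)
      atTop
    ≤ (1 / 2 : ℝ) * ∑ k : Fin 2,
        ((1 - M.bk k + M.bk k * M.r k) / (M.bk k * M.r k)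
          + ∑ n : Fin 2, M.bsplit k n * (1 - M.r k) / (M.r k * M.ζ n k)) :=
  stmt5_general M hpos'
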